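/- arXiv:2511.10832 — 2 statements merged into one kernel-verified Lean document; each statement's English description precedes it below -/
import Mathlib

section
/- For density matrices ρ and σ on ℂ^d with canonical purifications |ψ^ρ⟩ = (I ⊗ √ρ)|Γ⟩ and |ψ^σ⟩ = (I ⊗ √σ)|Γ⟩, the root fidelity satisfies √F(ρ,σ) = sup over contractions W (matrices with ‖W‖ ≤ 1) of Re⟨ψ^ρ|(W ⊗ I)|ψ^σ⟩, and this equals the same supremum restricted to unitary W. -/
open scoped ComplexOrder Kronecker
open Matrix

noncomputable def opNorm {m n : Type*} [Fintype m] [Fintype n] [DecidableEq n]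
    (A : Matrix m n ℂ) : ℝ :=
  ‖(Matrix.toEuclideanLin A).toContinuousLinearMap‖

/-- The positive semidefinite square root, as defined in Mathlib (Dec 2024) and since removed. -/
noncomputable def Matrix.PosSemidef.sqrt {n 𝕜 : Type*} [Fintype n] [DecidableEq n] [RCLike 𝕜]
    {A : Matrix n n 𝕜} (hA : A.PosSemidef) : Matrix n n 𝕜 :=
  hA.1.eigenvectorUnitary.1 * diagonal ((↑) ∘ (√·) ∘ hA.1.eigenvalues) *
  (star hA.1.eigenvectorUnitary : Matrix n n 𝕜)

noncomputable def traceNorm {n : Type*} [Fintype n] [DecidableEq n] (A : Matrix n n ℂ) : ℝ :=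
  ((Matrix.posSemidef_conjTranspose_mul_self A).sqrt).trace.re

noncomputable def frobNorm {n : Type*} [Fintype n] (A : Matrix n n ℂ) : ℝ :=
  Real.sqrt ((Aᴴ * A).trace.re)

/-!
The canonical purifications turn the pairing into a trace,
`⟨ψ^ρ|(W ⊗ I)|ψ^σ⟩ = tr (Wᵀ √ρ √σ)`, and `W ↦ Wᵀ` preserves contractions and unitaries.
For `N = √ρ √σ` write `N = U |N|` (polar decomposition: the map `|N| x ↦ N x` is an isometry
of the range of `|N|`, which extends to a unitary). Diagonalising `|N|`, and using that the
diagonal entries of a contraction have modulus at most one, gives `Re tr (X N) ≤ tr |N|` for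
every contraction `X`, with equality at `X = U⋆`.
-/

open scoped Matrix.Norms.L2Operator

theorem LinearIsometry.exists_apply_eq_of_norm_eq {𝕜 V : Type*} [RCLike 𝕜] [NormedAddCommGroup V]
    [InnerProductSpace 𝕜 V] [FiniteDimensional 𝕜 V] {a b : V →ₗ[𝕜] V}
    (h : ∀ x, ‖a x‖ = ‖b x‖) : ∃ u : V →ₗᵢ[𝕜] V, ∀ x, u (a x) = b x := by
  have hker : LinearMap.ker a ≤ LinearMap.ker b := fun x hx => by
    rw [LinearMap.mem_ker, ← norm_eq_zero, ← h, norm_eq_zero]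
    exact hx
  let L : LinearMap.range a →ₗ[𝕜] V :=
    (LinearMap.ker a).liftQ b hker ∘ₗ a.quotKerEquivRange.symm.toLinearMap
  have hL : ∀ x, L ⟨a x, LinearMap.mem_range_self a x⟩ = b x := fun x => by
    simp [L, LinearMap.quotKerEquivRange_symm_apply_image]
  let Li : LinearMap.range a →ₗᵢ[𝕜] V :=
    ⟨L, by rintro ⟨_, x, rfl⟩; rw [hL, ← h]; rfl⟩
  exact ⟨Li.extend, fun x => (Li.extend_apply ⟨a x, LinearMap.mem_range_self a x⟩).trans (hL x)⟩

theorem EuclideanSpace.norm_toLp_star {𝕜 ι : Type*} [RCLike 𝕜] [Fintype ι] (v : ι → 𝕜) :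
    ‖WithLp.toLp 2 (star v)‖ = ‖WithLp.toLp 2 v‖ := by
  simp [EuclideanSpace.norm_eq]

namespace Matrix

section RCLike

variable {𝕜 : Type*} [RCLike 𝕜]

theorem norm_apply_le_l2_opNorm {m n : Type*} [Fintype m] [Fintype n] [DecidableEq n]
    (A : Matrix m n 𝕜) (i : m) (j : n) : ‖A i j‖ ≤ ‖A‖ := by
  have h := A.l2_opNorm_mulVec (EuclideanSpace.single j 1)
  simp only [PiLp.ofLp_single, PiLp.norm_single, norm_one, mul_one] at h
  calc ‖A i j‖ = ‖(EuclideanSpace.equiv m 𝕜).symm (A *ᵥ Pi.single j 1) i‖ := by simp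
    _ ≤ ‖(EuclideanSpace.equiv m 𝕜).symm (A *ᵥ Pi.single j 1)‖ := PiLp.norm_apply_le _ i
    _ ≤ ‖A‖ := h

theorem l2_opNorm_map_star_le {m n : Type*} [Fintype m] [Fintype n] [DecidableEq n]
    (A : Matrix m n 𝕜) : ‖A.map star‖ ≤ ‖A‖ := by
  rw [l2_opNorm_def]
  refine ContinuousLinearMap.opNorm_le_bound _ (norm_nonneg _) fun x => ?_
  calc _ = ‖WithLp.toLp 2 (star (A *ᵥ star x.ofLp))‖ := by
        congr 1
        ext i
        simp [mulVec, dotProduct]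
    _ = ‖(EuclideanSpace.equiv m 𝕜).symm (A *ᵥ (WithLp.toLp 2 (star x.ofLp)).ofLp)‖ :=
        EuclideanSpace.norm_toLp_star _
    _ ≤ ‖A‖ * ‖WithLp.toLp 2 (star x.ofLp)‖ := A.l2_opNorm_mulVec _
    _ = ‖A‖ * ‖x‖ := by rw [EuclideanSpace.norm_toLp_star]

theorem l2_opNorm_transpose {m n : Type*} [Fintype m] [Fintype n] [DecidableEq m]
    [DecidableEq n] (A : Matrix m n 𝕜) : ‖Aᵀ‖ = ‖A‖ := by
  have h : Aᵀ = (A.map star)ᴴ := by ext; simp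
  have h' : (A.map star).map star = A := by ext; simp
  rw [h, l2_opNorm_conjTranspose]
  refine le_antisymm (l2_opNorm_map_star_le A) ?_
  simpa only [h'] using l2_opNorm_map_star_le (A.map star)

variable {n : Type*} [Fintype n] [DecidableEq n]

theorem PosSemidef.sqrt_eq {A : Matrix n n 𝕜} (hA : A.PosSemidef) :
    hA.sqrt = Unitary.conjStarAlgAut 𝕜 _ hA.1.eigenvectorUnitary
      (diagonal ((↑) ∘ (√·) ∘ hA.1.eigenvalues)) := by
  rw [Unitary.conjStarAlgAut_apply]
  rfl

theorem PosSemidef.posSemidef_sqrt {A : Matrix n n 𝕜} (hA : A.PosSemidef) : hA.sqrt.PosSemidef := by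
  rw [hA.sqrt_eq, Unitary.conjStarAlgAut_apply]
  refine PosSemidef.mul_mul_conjTranspose_same (posSemidef_diagonal_iff.mpr fun i => ?_) _
  exact RCLike.ofReal_nonneg.mpr (Real.sqrt_nonneg _)

theorem PosSemidef.sqrt_mul_self {A : Matrix n n 𝕜} (hA : A.PosSemidef) : hA.sqrt * hA.sqrt = A := by
  conv_rhs => rw [hA.1.spectral_theorem]
  rw [hA.sqrt_eq, ← map_mul, diagonal_mul_diagonal]
  congr 2
  ext i
  simp [← RCLike.ofReal_mul, Real.mul_self_sqrt (hA.eigenvalues_nonneg i)]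

theorem l2_opNorm_le_one_of_mem_unitaryGroup {U : Matrix n n 𝕜} (hU : U ∈ unitaryGroup n 𝕜) :
    ‖U‖ ≤ 1 := by
  rcases subsingleton_or_nontrivial (Matrix n n 𝕜) with _ | _
  · simp [Subsingleton.elim U 0]
  · exact (CStarRing.norm_of_mem_unitary hU).le

theorem exists_mem_unitaryGroup_mul_eq_of_conjTranspose_mul_self_eq {A B : Matrix n n 𝕜}
    (h : Aᴴ * A = Bᴴ * B) : ∃ U ∈ unitaryGroup n 𝕜, U * A = B := by
  let T := toEuclideanCLM (n := n) (𝕜 := 𝕜)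
  have hnorm : ∀ x, ‖T A x‖ = ‖T B x‖ := fun x => by
    have hAB : ContinuousLinearMap.adjoint (T A) ∘L T A =
        ContinuousLinearMap.adjoint (T B) ∘L T B := by
      simpa only [← star_eq_conjTranspose, map_mul, map_star, ContinuousLinearMap.star_eq_adjoint,
        ContinuousLinearMap.mul_def] using congrArg T h
    rw [← sq_eq_sq₀ (norm_nonneg _) (norm_nonneg _),
      ContinuousLinearMap.apply_norm_sq_eq_inner_adjoint_left,
      ContinuousLinearMap.apply_norm_sq_eq_inner_adjoint_left, hAB]
  obtain ⟨u, hu⟩ := LinearIsometry.exists_apply_eq_of_norm_eq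
    (a := (T A).toLinearMap) (b := (T B).toLinearMap) hnorm
  refine ⟨T.symm u.toContinuousLinearMap, ?_, ?_⟩
  · rw [mem_unitaryGroup_iff', ← (EquivLike.injective T).eq_iff, map_mul, map_star, map_one,
      StarAlgEquiv.apply_symm_apply, ContinuousLinearMap.star_eq_adjoint]
    exact (ContinuousLinearMap.norm_map_iff_adjoint_comp_self _).mp u.norm_map
  · rw [← (EquivLike.injective T).eq_iff, map_mul, StarAlgEquiv.apply_symm_apply]
    ext1 x
    exact hu x

theorem re_trace_mul_le_of_posSemidef {X P : Matrix n n 𝕜} (hP : P.PosSemidef) (hX : ‖X‖ ≤ 1) :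
    RCLike.re (X * P).trace ≤ RCLike.re P.trace := by
  set U := hP.1.eigenvectorUnitary
  have hY : ‖star (U : Matrix n n 𝕜) * X * U‖ ≤ 1 := by
    rwa [CStarRing.norm_mul_coe_unitary, CStarRing.norm_mem_unitary_mul _ (Unitary.star_mem U.2)]
  have htr : (X * P).trace = ∑ i, (star (U : Matrix n n 𝕜) * X * U) i i * hP.1.eigenvalues i := by
    conv_lhs => rw [hP.1.spectral_theorem, Unitary.conjStarAlgAut_apply, ← Matrix.mul_assoc,
      ← Matrix.mul_assoc, trace_mul_cycle, ← Matrix.mul_assoc]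
    simp [trace, mul_diagonal, U]
  rw [htr, hP.1.trace_eq_sum_eigenvalues, map_sum, map_sum]
  refine Finset.sum_le_sum fun i _ => ?_
  rw [RCLike.re_mul_ofReal, RCLike.ofReal_re]
  exact mul_le_of_le_one_left (hP.eigenvalues_nonneg i)
    ((RCLike.re_le_norm _).trans ((norm_apply_le_l2_opNorm _ i i).trans hY))

end RCLike

theorem vec_one {R n : Type*} [Zero R] [One R] [DecidableEq n] :
    vec (1 : Matrix n n R) = fun p => if p.1 = p.2 then 1 else 0 := by
  ext p
  simp [vec, one_apply, eq_comm]

theorem star_vec_dotProduct_kronecker_one_mulVec_vec {R m n : Type*} [CommSemiring R] [StarRing R]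
    [Fintype m] [Fintype n] [DecidableEq m] (A B : Matrix m n R) (W : Matrix n n R) :
    star (vec A) ⬝ᵥ ((W ⊗ₖ (1 : Matrix m m R)) *ᵥ vec B) = (Wᵀ * (Aᴴ * B)).trace := by
  rw [kronecker_mulVec_vec, star_vec_dotProduct_vec, Matrix.one_mul, ← Matrix.mul_assoc,
    trace_mul_comm]

variable {n : Type*} [Fintype n] [DecidableEq n]

theorem exists_mem_unitaryGroup_mul_sqrt_eq (N : Matrix n n ℂ) :
    ∃ U ∈ unitaryGroup n ℂ, U * (posSemidef_conjTranspose_mul_self N).sqrt = N := by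
  have hP := posSemidef_conjTranspose_mul_self N
  refine exists_mem_unitaryGroup_mul_eq_of_conjTranspose_mul_self_eq ?_
  rw [hP.posSemidef_sqrt.1.eq, hP.sqrt_mul_self]

theorem re_trace_mul_le_traceNorm {X : Matrix n n ℂ} (hX : ‖X‖ ≤ 1) (N : Matrix n n ℂ) :
    (X * N).trace.re ≤ traceNorm N := by
  have hP := posSemidef_conjTranspose_mul_self N
  obtain ⟨U, hU, hUP⟩ := exists_mem_unitaryGroup_mul_sqrt_eq N
  calc (X * N).trace.re = (X * U * hP.sqrt).trace.re := by rw [Matrix.mul_assoc, hUP]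
    _ ≤ traceNorm N := re_trace_mul_le_of_posSemidef hP.posSemidef_sqrt
      ((CStarRing.norm_mul_mem_unitary X hU).trans_le hX)

theorem exists_mem_unitaryGroup_re_trace_mul_eq_traceNorm (N : Matrix n n ℂ) :
    ∃ U ∈ unitaryGroup n ℂ, (U * N).trace.re = traceNorm N := by
  obtain ⟨U, hU, hUP⟩ := exists_mem_unitaryGroup_mul_sqrt_eq N
  refine ⟨star U, Unitary.star_mem hU, ?_⟩
  calc (star U * N).trace.re
      = (star U * U * (posSemidef_conjTranspose_mul_self N).sqrt).trace.re := by
        rw [Matrix.mul_assoc, hUP]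
    _ = traceNorm N := by rw [Unitary.star_mul_self_of_mem hU, Matrix.one_mul]; rfl

end Matrix

theorem root_fidelity_eq_sSup_general {d : ℕ} (ρ σ : Matrix (Fin d) (Fin d) ℂ)
    (hρ : ρ.PosSemidef) (hσ : σ.PosSemidef) :
    ∀ Γ : Fin d × Fin d → ℂ, (Γ = fun p => if p.1 = p.2 then 1 else 0) →
    ∀ ψρ ψσ : Fin d × Fin d → ℂ,
      ψρ = ((1 : Matrix (Fin d) (Fin d) ℂ) ⊗ₖ hρ.sqrt).mulVec Γ →
      ψσ = ((1 : Matrix (Fin d) (Fin d) ℂ) ⊗ₖ hσ.sqrt).mulVec Γ →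
    (traceNorm (hρ.sqrt * hσ.sqrt) =
      sSup {x : ℝ | ∃ W : Matrix (Fin d) (Fin d) ℂ, opNorm W ≤ 1 ∧
        x = (star ψρ ⬝ᵥ ((W ⊗ₖ (1 : Matrix (Fin d) (Fin d) ℂ)).mulVec ψσ)).re} ∧
    traceNorm (hρ.sqrt * hσ.sqrt) =
      sSup {x : ℝ | ∃ U ∈ Matrix.unitaryGroup (Fin d) ℂ,
        x = (star ψρ ⬝ᵥ ((U ⊗ₖ (1 : Matrix (Fin d) (Fin d) ℂ)).mulVec ψσ)).re}) := by
  rintro Γ rfl ψρ ψσ rfl rfl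
  simp only [← vec_one, ← vec_mul_eq_mulVec, Matrix.mul_one,
    star_vec_dotProduct_kronecker_one_mulVec_vec, hρ.posSemidef_sqrt.1.eq]
  set N := hρ.sqrt * hσ.sqrt
  have hle : ∀ W : Matrix (Fin d) (Fin d) ℂ, ‖W‖ ≤ 1 → (Wᵀ * N).trace.re ≤ traceNorm N :=
    fun W hW => re_trace_mul_le_traceNorm (by rwa [l2_opNorm_transpose]) N
  obtain ⟨U, hU, hUN⟩ := exists_mem_unitaryGroup_re_trace_mul_eq_traceNorm N
  have hUT : Uᵀ ∈ unitaryGroup (Fin d) ℂ := transpose_mem_unitaryGroup_iff.mpr hU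
  have hmax : traceNorm N = ((Uᵀ)ᵀ * N).trace.re := by rw [transpose_transpose, hUN]
  refine ⟨(IsGreatest.csSup_eq ⟨?_, ?_⟩).symm, (IsGreatest.csSup_eq ⟨?_, ?_⟩).symm⟩
  · exact ⟨Uᵀ, l2_opNorm_le_one_of_mem_unitaryGroup hUT, hmax⟩
  · rintro _ ⟨W, hW, rfl⟩
    exact hle W hW
  · exact ⟨Uᵀ, hUT, hmax⟩
  · rintro _ ⟨W, hW, rfl⟩
    exact hle W (l2_opNorm_le_one_of_mem_unitaryGroup hW)

/-- Root fidelity via canonical purifications: supremum over contractions, also over unitaries. -/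
theorem root_fidelity_eq_sSup {d : ℕ} (ρ σ : Matrix (Fin d) (Fin d) ℂ)
    (hρ : ρ.PosSemidef) (hσ : σ.PosSemidef) (hρ1 : ρ.trace = 1) (hσ1 : σ.trace = 1) :
    ∀ Γ : Fin d × Fin d → ℂ, (Γ = fun p => if p.1 = p.2 then 1 else 0) →
    ∀ ψρ ψσ : Fin d × Fin d → ℂ,
      ψρ = ((1 : Matrix (Fin d) (Fin d) ℂ) ⊗ₖ hρ.sqrt).mulVec Γ →
      ψσ = ((1 : Matrix (Fin d) (Fin d) ℂ) ⊗ₖ hσ.sqrt).mulVec Γ →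
    (traceNorm (hρ.sqrt * hσ.sqrt) =
      sSup {x : ℝ | ∃ W : Matrix (Fin d) (Fin d) ℂ, opNorm W ≤ 1 ∧
        x = (star ψρ ⬝ᵥ ((W ⊗ₖ (1 : Matrix (Fin d) (Fin d) ℂ)).mulVec ψσ)).re} ∧
    traceNorm (hρ.sqrt * hσ.sqrt) =
      sSup {x : ℝ | ∃ U ∈ Matrix.unitaryGroup (Fin d) ℂ,
        x = (star ψρ ⬝ᵥ ((U ⊗ₖ (1 : Matrix (Fin d) (Fin d) ℂ)).mulVec ψσ)).re}) :=
  root_fidelity_eq_sSup_general ρ σ hρ hσ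
end

section
/- Let ρ and σ be density matrices and let p ∈ (0,1) with q = 1 − p. Then ‖pρ − qσ‖₁² ≤ 1 − 4pq + 4pq · d_B²(ρ,σ), where d_B²(ρ,σ) = 2(1 − ‖√ρ√σ‖₁) is the squared Bures distance. -/
open scoped ComplexOrder Kronecker
open Matrix

/-!
Let `b` be an eigenbasis of `M = pρ - qσ` and let `r i = ⟪b i, ρ b i⟫`, `s i = ⟪b i, σ b i⟫` be the
distributions obtained by measuring `ρ` and `σ` in it. Then `‖M‖₁ = ∑ |p r i - q s i|`, and
Cauchy–Schwarz applied to `|x² - y²| = |x - y| |x + y|` with `x = √(p r i)`, `y = √(q s i)` gives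
`‖M‖₁² ≤ 1 - 4pq G²`, where `G = ∑ √(r i s i)` is the classical fidelity.

Measuring does not decrease the fidelity: by the polar decomposition `‖√ρ√σ‖₁ = re tr (U √ρ √σ)`
for a contraction `U`, and expanding this trace in the basis `b` gives
`‖√ρ√σ‖₁ ≤ ∑ ‖√ρ b i‖ ‖√σ b i‖ = G`. Finally `1 - 4pq G² ≤ 1 - 4pq + 8pq (1 - ‖√ρ√σ‖₁)`
because `G² + 1 - 2G ≥ 0`.
-/

open scoped MatrixOrder InnerProductSpace

namespace Matrix

variable {n 𝕜 : Type*} [Fintype n] [DecidableEq n] [RCLike 𝕜]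

lemma PosSemidef.sqrt_eq_cfcSqrt {A : Matrix n n 𝕜} (hA : A.PosSemidef) :
    hA.sqrt = CFC.sqrt A := by
  rw [CFC.sqrt_eq_cfc, cfc_nnreal_eq_real _ A hA.nonneg, hA.1.cfc_eq]
  simp only [IsHermitian.cfc, PosSemidef.sqrt]
  congr 3
  ext j
  simp [hA.eigenvalues_nonneg]

lemma IsHermitian.trace_cfc {A : Matrix n n 𝕜} (hA : A.IsHermitian) (f : ℝ → ℝ) :
    (cfc f A).trace = ∑ i, (f (hA.eigenvalues i) : 𝕜) := by
  rw [hA.cfc_eq, IsHermitian.cfc, Unitary.conjStarAlgAut_apply, trace_mul_cycle,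
    Unitary.coe_star_mul_self, one_mul, trace_diagonal]
  rfl

lemma IsHermitian.eigenvalues_eq_re_inner {A : Matrix n n 𝕜} (hA : A.IsHermitian) (i : n) :
    hA.eigenvalues i =
      RCLike.re ⟪hA.eigenvectorBasis i, toEuclideanLin A (hA.eigenvectorBasis i)⟫_𝕜 := by
  rw [hA.eigenvalues_eq, EuclideanSpace.inner_eq_star_dotProduct, dotProduct_comm]
  rfl

lemma trace_eq_sum_inner {ι : Type*} [Fintype ι] (A : Matrix n n 𝕜)
    (b : OrthonormalBasis ι 𝕜 (EuclideanSpace 𝕜 n)) :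
    A.trace = ∑ i, ⟪b i, toEuclideanLin A (b i)⟫_𝕜 := by
  rw [← LinearMap.trace_eq_sum_inner, toEuclideanLin, toLpLin_eq_toLin,
    LinearMap.trace_eq_matrix_trace _ (PiLp.basisFun 2 𝕜 n), LinearMap.toMatrix_toLin]

lemma re_inner_toEuclideanLin_mul_conjTranspose (U : Matrix n n 𝕜) (w : EuclideanSpace 𝕜 n) :
    RCLike.re ⟪w, toEuclideanLin (U * Uᴴ) w⟫_𝕜 = ‖toEuclideanLin Uᴴ w‖ ^ 2 := by
  rw [toEuclideanLin, toLpLin_mul_same, LinearMap.comp_apply, ← toEuclideanLin,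
    toEuclideanLin_conjTranspose_eq_adjoint, ← LinearMap.adjoint_inner_left, inner_self_eq_norm_sq]

lemma norm_toEuclideanLin_conjTranspose_le {U : Matrix n n 𝕜} (hU : U * Uᴴ ≤ 1)
    (w : EuclideanSpace 𝕜 n) : ‖toEuclideanLin Uᴴ w‖ ≤ ‖w‖ := by
  have h := (isPositive_toEuclideanLin_iff.mpr (le_iff.mp hU)).re_inner_nonneg_right w
  rw [map_sub, LinearMap.sub_apply, inner_sub_right, map_sub,
    re_inner_toEuclideanLin_mul_conjTranspose, toEuclideanLin, toLpLin_one, LinearMap.id_apply,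
    inner_self_eq_norm_sq, sub_nonneg] at h
  exact (pow_le_pow_iff_left₀ (norm_nonneg _) (norm_nonneg _) two_ne_zero).mp h

lemma inner_toEuclideanLin_mul_mul (A B U : Matrix n n 𝕜) (v : EuclideanSpace 𝕜 n) :
    ⟪v, toEuclideanLin (B * (U * A)) v⟫_𝕜 =
      ⟪toEuclideanLin Uᴴ (toEuclideanLin Bᴴ v), toEuclideanLin A v⟫_𝕜 := by
  rw [toEuclideanLin_conjTranspose_eq_adjoint, toEuclideanLin_conjTranspose_eq_adjoint,
    LinearMap.adjoint_inner_left, LinearMap.adjoint_inner_left, toEuclideanLin,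
    toLpLin_mul_same, toLpLin_mul_same]
  rfl

lemma re_trace_mul_mul_le {ι : Type*} [Fintype ι] {U : Matrix n n 𝕜} (hU : U * Uᴴ ≤ 1)
    (A B : Matrix n n 𝕜) (b : OrthonormalBasis ι 𝕜 (EuclideanSpace 𝕜 n)) :
    RCLike.re (U * A * B).trace ≤
      ∑ i, ‖toEuclideanLin A (b i)‖ * ‖toEuclideanLin Bᴴ (b i)‖ := by
  calc RCLike.re (U * A * B).trace
      = ∑ i, RCLike.re
          ⟪toEuclideanLin Uᴴ (toEuclideanLin Bᴴ (b i)), toEuclideanLin A (b i)⟫_𝕜 := by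
        rw [trace_mul_comm, trace_eq_sum_inner _ b, map_sum]
        simp only [inner_toEuclideanLin_mul_mul]
    _ ≤ ∑ i, ‖toEuclideanLin Bᴴ (b i)‖ * ‖toEuclideanLin A (b i)‖ := by
        refine Finset.sum_le_sum fun i _ ↦ (RCLike.re_le_norm _).trans ?_
        refine (norm_inner_le_norm _ _).trans ?_
        gcongr
        exact norm_toEuclideanLin_conjTranspose_le hU _
    _ = _ := by simp only [mul_comm]

lemma PosSemidef.norm_toEuclideanLin_sqrt_sq {A : Matrix n n 𝕜} (hA : A.PosSemidef)
    (v : EuclideanSpace 𝕜 n) :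
    ‖toEuclideanLin (CFC.sqrt A) v‖ ^ 2 = RCLike.re ⟪v, toEuclideanLin A v⟫_𝕜 := by
  have h := re_inner_toEuclideanLin_mul_conjTranspose (CFC.sqrt A) v
  rwa [(CFC.sqrt_nonneg A).posSemidef.1.eq, CFC.sqrt_mul_sqrt_self A hA.nonneg, eq_comm] at h

lemma traceNorm_eq_re_trace_abs (A : Matrix n n ℂ) : traceNorm A = (CFC.abs A).trace.re := by
  rw [traceNorm, PosSemidef.sqrt_eq_cfcSqrt, CFC.abs, star_eq_conjTranspose]

lemma IsHermitian.traceNorm_eq_sum_abs_eigenvalues {A : Matrix n n ℂ} (hA : A.IsHermitian) :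
    traceNorm A = ∑ i, |hA.eigenvalues i| := by
  rw [traceNorm_eq_re_trace_abs, CFC.abs_eq_cfc_norm A hA.isSelfAdjoint, hA.trace_cfc,
    Complex.re_sum]
  simp

lemma exists_traceNorm_eq_re_trace_mul (X : Matrix n n ℂ) :
    ∃ U : Matrix n n ℂ, U * Uᴴ ≤ 1 ∧ traceNorm X = (U * X).trace.re := by
  set N := CFC.abs X
  have hcont (f : ℝ → ℝ) : ContinuousOn f (spectrum ℝ N) := N.finite_real_spectrum.continuousOn f
  have hNN : Xᴴ * X = cfc (fun x : ℝ ↦ x * x) N := by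
    rw [← star_eq_conjTranspose, ← CFC.abs_mul_abs X, cfc_mul _ _ N (hcont _) (hcont _),
      cfc_id' ℝ N]
  -- `P` is the pseudo-inverse of `|X|` (as `(0 : ℝ)⁻¹ = 0`), and `P * Xᴴ` is the adjoint of the
  -- partial isometry in the polar decomposition of `X`.
  set P := cfc (·⁻¹ : ℝ → ℝ) N
  have hP : Pᴴ = P := (cfc_predicate _ N : IsSelfAdjoint P)
  refine ⟨P * Xᴴ, ?_, ?_⟩
  · rw [conjTranspose_mul, conjTranspose_conjTranspose, hP, mul_assoc, ← mul_assoc Xᴴ, hNN,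
      ← cfc_mul _ _ N (hcont _) (hcont _), ← cfc_mul _ _ N (hcont _) (hcont _)]
    refine cfc_le_one _ N fun x _ ↦ ?_
    exact (show x⁻¹ * (x * x * x⁻¹) = x * x⁻¹ by
      rw [← mul_assoc, ← mul_assoc, inv_mul_mul_self]).trans_le mul_inv_le_one
  · rw [traceNorm_eq_re_trace_abs, mul_assoc, hNN, ← cfc_mul _ _ N (hcont _) (hcont _)]
    simp only [← mul_assoc, inv_mul_mul_self, cfc_id' ℝ N]
    rfl

lemma traceNorm_mul_le {ι : Type*} [Fintype ι] (A B : Matrix n n ℂ)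
    (b : OrthonormalBasis ι ℂ (EuclideanSpace ℂ n)) :
    traceNorm (A * B) ≤ ∑ i, ‖toEuclideanLin A (b i)‖ * ‖toEuclideanLin Bᴴ (b i)‖ := by
  obtain ⟨U, hU, h⟩ := exists_traceNorm_eq_re_trace_mul (A * B)
  rw [h, ← mul_assoc]
  exact re_trace_mul_mul_le hU A B b

lemma traceNorm_sqrt_mul_sqrt_le {ι : Type*} [Fintype ι] {A B : Matrix n n ℂ}
    (hA : A.PosSemidef) (hB : B.PosSemidef) (b : OrthonormalBasis ι ℂ (EuclideanSpace ℂ n)) :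
    traceNorm (CFC.sqrt A * CFC.sqrt B) ≤
      ∑ i, √(RCLike.re ⟪b i, toEuclideanLin A (b i)⟫_ℂ *
        RCLike.re ⟪b i, toEuclideanLin B (b i)⟫_ℂ) := by
  refine (traceNorm_mul_le _ _ b).trans_eq (Finset.sum_congr rfl fun i _ ↦ ?_)
  rw [(CFC.sqrt_nonneg B).posSemidef.1.eq, ← hA.norm_toEuclideanLin_sqrt_sq,
    ← hB.norm_toEuclideanLin_sqrt_sq, ← mul_pow, Real.sqrt_sq (by positivity)]

end Matrix

lemma sq_sum_abs_sq_sub_sq_le {ι : Type*} (s : Finset ι) (a b : ι → ℝ) :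
    (∑ i ∈ s, |a i ^ 2 - b i ^ 2|) ^ 2 ≤
      (∑ i ∈ s, (a i ^ 2 + b i ^ 2)) ^ 2 - 4 * (∑ i ∈ s, a i * b i) ^ 2 := by
  have hsub : ∑ i ∈ s, (a i - b i) ^ 2 =
      ∑ i ∈ s, (a i ^ 2 + b i ^ 2) - 2 * ∑ i ∈ s, a i * b i := by
    rw [Finset.mul_sum, ← Finset.sum_sub_distrib]
    exact Finset.sum_congr rfl fun i _ ↦ by ring
  have hadd : ∑ i ∈ s, (a i + b i) ^ 2 =
      ∑ i ∈ s, (a i ^ 2 + b i ^ 2) + 2 * ∑ i ∈ s, a i * b i := by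
    rw [Finset.mul_sum, ← Finset.sum_add_distrib]
    exact Finset.sum_congr rfl fun i _ ↦ by ring
  calc (∑ i ∈ s, |a i ^ 2 - b i ^ 2|) ^ 2 = (∑ i ∈ s, |a i - b i| * |a i + b i|) ^ 2 := by
        simp only [sq_sub_sq, abs_mul, mul_comm]
    _ ≤ (∑ i ∈ s, |a i - b i| ^ 2) * ∑ i ∈ s, |a i + b i| ^ 2 :=
        Finset.sum_mul_sq_le_sq_mul_sq s _ _
    _ = _ := by
        simp only [sq_abs]
        rw [hsub, hadd]
        ring

lemma sq_sum_abs_mul_sub_mul_le {ι : Type*} (s : Finset ι) {p q : ℝ} (hp : 0 ≤ p) (hq : 0 ≤ q)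
    {r t : ι → ℝ} (hr : ∀ i ∈ s, 0 ≤ r i) (ht : ∀ i ∈ s, 0 ≤ t i) :
    (∑ i ∈ s, |p * r i - q * t i|) ^ 2 ≤
      (∑ i ∈ s, (p * r i + q * t i)) ^ 2 - 4 * p * q * (∑ i ∈ s, √(r i * t i)) ^ 2 := by
  have h := sq_sum_abs_sq_sub_sq_le s (fun i ↦ √(p * r i)) (fun i ↦ √(q * t i))
  have hsq : ∀ i ∈ s, √(p * r i) ^ 2 = p * r i ∧ √(q * t i) ^ 2 = q * t i := fun i hi ↦
    ⟨Real.sq_sqrt (mul_nonneg hp (hr i hi)), Real.sq_sqrt (mul_nonneg hq (ht i hi))⟩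
  have habs : ∑ i ∈ s, |√(p * r i) ^ 2 - √(q * t i) ^ 2| = ∑ i ∈ s, |p * r i - q * t i| :=
    Finset.sum_congr rfl fun i hi ↦ by rw [(hsq i hi).1, (hsq i hi).2]
  have hadd : ∑ i ∈ s, (√(p * r i) ^ 2 + √(q * t i) ^ 2) = ∑ i ∈ s, (p * r i + q * t i) :=
    Finset.sum_congr rfl fun i hi ↦ by rw [(hsq i hi).1, (hsq i hi).2]
  have hmul : ∑ i ∈ s, √(p * r i) * √(q * t i) = √(p * q) * ∑ i ∈ s, √(r i * t i) := by
    rw [Finset.mul_sum]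
    refine Finset.sum_congr rfl fun i hi ↦ ?_
    rw [← Real.sqrt_mul (mul_nonneg hp (hr i hi)), ← Real.sqrt_mul (mul_nonneg hp hq)]
    ring_nf
  rw [habs, hadd, hmul, mul_pow, Real.sq_sqrt (mul_nonneg hp hq)] at h
  linarith

/-- `‖pρ − qσ‖₁² ≤ 1 − 4pq + 4pq·d_B²(ρ,σ)` with `d_B² = 2(1 − ‖√ρ√σ‖₁)`. -/
theorem trace_norm_sq_le_bures {d : ℕ} (ρ σ : Matrix (Fin d) (Fin d) ℂ)
    (hρ : ρ.PosSemidef) (hσ : σ.PosSemidef) (hρ1 : ρ.trace = 1) (hσ1 : σ.trace = 1)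
    (p : ℝ) (hp : p ∈ Set.Ioo (0 : ℝ) 1) :
    (traceNorm ((p : ℂ) • ρ - ((1 - p : ℝ) : ℂ) • σ)) ^ 2 ≤
      1 - 4 * p * (1 - p) +
        4 * p * (1 - p) * (2 * (1 - traceNorm (hρ.sqrt * hσ.sqrt))) := by
  obtain ⟨hp0, hp1⟩ := hp
  have hM : ((p : ℂ) • ρ - ((1 - p : ℝ) : ℂ) • σ).IsHermitian :=
    (hρ.1.smul (Complex.conj_ofReal p)).sub (hσ.1.smul (Complex.conj_ofReal _))
  set b := hM.eigenvectorBasis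
  set r : Fin d → ℝ := fun i ↦ RCLike.re ⟪b i, toEuclideanLin ρ (b i)⟫_ℂ
  set s : Fin d → ℝ := fun i ↦ RCLike.re ⟪b i, toEuclideanLin σ (b i)⟫_ℂ
  have hμ (i : Fin d) : hM.eigenvalues i = p * r i - (1 - p) * s i := by
    rw [hM.eigenvalues_eq_re_inner, map_sub, map_smul, map_smul, LinearMap.sub_apply,
      LinearMap.smul_apply, LinearMap.smul_apply, inner_sub_right, inner_smul_right,
      inner_smul_right, map_sub, RCLike.re_to_complex, RCLike.re_to_complex,
      Complex.re_ofReal_mul, Complex.re_ofReal_mul]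
    rfl
  have hre_trace (A : Matrix (Fin d) (Fin d) ℂ) :
      ∑ i, RCLike.re ⟪b i, toEuclideanLin A (b i)⟫_ℂ = A.trace.re := by
    rw [trace_eq_sum_inner A b, Complex.re_sum]
    rfl
  have hr1 : ∑ i, r i = 1 := by simp only [r, hre_trace, hρ1, Complex.one_re]
  have hs1 : ∑ i, s i = 1 := by simp only [s, hre_trace, hσ1, Complex.one_re]
  have hclassical := sq_sum_abs_mul_sub_mul_le Finset.univ hp0.le (sub_nonneg.2 hp1.le)
    (fun i _ ↦ (isPositive_toEuclideanLin_iff.mpr hρ).re_inner_nonneg_right (b i))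
    (fun i _ ↦ (isPositive_toEuclideanLin_iff.mpr hσ).re_inner_nonneg_right (b i))
  rw [Finset.sum_add_distrib, ← Finset.mul_sum, ← Finset.mul_sum, hr1, hs1] at hclassical
  have hfidelity := traceNorm_sqrt_mul_sqrt_le hρ hσ b
  rw [hρ.sqrt_eq_cfcSqrt, hσ.sqrt_eq_cfcSqrt, hM.traceNorm_eq_sum_abs_eigenvalues]
  simp only [hμ]
  have hpq : 0 ≤ p * (1 - p) := mul_nonneg hp0.le (sub_nonneg.2 hp1.le)
  nlinarith [mul_nonneg hpq (sq_nonneg (∑ i, √(r i * s i) - 1)),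
    mul_nonneg hpq (sub_nonneg.2 hfidelity)]
end
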